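/- arXiv:1109.1658 — 4 statements merged into one kernel-verified Lean document; each statement's English description precedes it below -/
import Mathlib

section
/- Every simple closure space is a complete atomistic lattice whose atoms are exactly the singletons, and conversely every complete atomistic lattice L is isomorphic to the simple closure space {Σ[a] | a ∈ L} on its set of atoms Σ, where Σ[a] is the set of atoms below a. -/
open Set

/-- A simple closure space on `σ`: a family of subsets closed under arbitrary
intersections (the empty intersection giving `univ`), containing `∅` and all singletons. -/
def IsSCS {σ : Type*} (L : Set (Set σ)) : Prop :=
  (∀ ω ⊆ L, ⋂₀ ω ∈ L) ∧ (∅ : Set σ) ∈ L ∧ ∀ p : σ, {p} ∈ L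

/-- The join of a subset `A` of atoms/points in a simple closure space `L`. -/
def sJoin {σ : Type*} (L : Set (Set σ)) (A : Set σ) : Set σ := ⋂₀ {b ∈ L | A ⊆ b}

/-- `b` covers `a` in `L`. -/
def CoversIn {σ : Type*} (L : Set (Set σ)) (a b : Set σ) : Prop :=
  a ⊂ b ∧ ∀ c ∈ L, a ⊆ c → c ⊆ b → c = a ∨ c = b

/-- `x` is a coatom of `L`. -/
def IsCoatomOf {σ : Type*} (L : Set (Set σ)) (x : Set σ) : Prop :=
  x ∈ L ∧ x ≠ univ ∧ ∀ c ∈ L, x ⊆ c → c = x ∨ c = univ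

/-- `L` is coatomistic: every element is a meet of coatoms. -/
def Coatomistic {σ : Type*} (L : Set (Set σ)) : Prop :=
  ∀ a ∈ L, a = ⋂₀ {x | IsCoatomOf L x ∧ a ⊆ x}

/-- Covering property: for any atom `p` and `a ∈ L` with `p ∧ a = 0`,
`p ∨ a` covers `a`. -/
def HasCovProp {σ : Type*} (L : Set (Set σ)) : Prop :=
  ∀ p : σ, ∀ a ∈ L, p ∉ a → CoversIn L a (sJoin L (insert p a))

/-- Covering property of the dual lattice of `L`. -/
def HasDualCovProp {σ : Type*} (L : Set (Set σ)) : Prop :=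
  ∀ x, IsCoatomOf L x → ∀ a ∈ L, sJoin L (x ∪ a) = univ → CoversIn L (x ∩ a) a

/-- `f` is an orthocomplementation of `L`: an order-reversing involution with
`a ∨ f a = 1` for all `a ∈ L`. -/
def IsOrthoOn {σ : Type*} (L : Set (Set σ)) (f : Set σ → Set σ) : Prop :=
  (∀ a ∈ L, f a ∈ L) ∧ (∀ a ∈ L, f (f a) = a) ∧
  (∀ a ∈ L, ∀ b ∈ L, a ⊆ b → f b ⊆ f a) ∧
  (∀ a ∈ L, ∀ b ∈ L, a ∪ f a ⊆ b → b = univ)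

/-- The permutation `g` of the points induces an automorphism of `L`. -/
def IsAutoOn {σ : Type*} (L : Set (Set σ)) (g : Equiv.Perm σ) : Prop :=
  ∀ a, a ∈ L ↔ g '' a ∈ L

/-- `L` contains `MO₃`: three distinct atoms `p, q, r` such that `p ∨ q`
covers each of them. -/
def ContainsMO3 {σ : Type*} (L : Set (Set σ)) : Prop :=
  ∃ p q r : σ, p ≠ q ∧ p ≠ r ∧ q ≠ r ∧
    CoversIn L {p} (sJoin L {p, q}) ∧ CoversIn L {q} (sJoin L {p, q}) ∧
    CoversIn L {r} (sJoin L {p, q})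

/-- `L` contains `MO₄`: four distinct atoms `p, q, r, s` such that `p ∨ q`
covers each of them. -/
def ContainsMO4 {σ : Type*} (L : Set (Set σ)) : Prop :=
  ∃ p q r s : σ, p ≠ q ∧ p ≠ r ∧ p ≠ s ∧ q ≠ r ∧ q ≠ s ∧ r ≠ s ∧
    CoversIn L {p} (sJoin L {p, q}) ∧ CoversIn L {q} (sJoin L {p, q}) ∧
    CoversIn L {r} (sJoin L {p, q}) ∧ CoversIn L {s} (sJoin L {p, q})

/-- A connected covering of the point set of `L`. -/
def IsConnCover {σ : Type*} (L : Set (Set σ)) (𝒜 : Set (Set σ)) : Prop :=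
  ⋃₀ 𝒜 = Set.univ ∧
  (∀ A ∈ 𝒜, ∃ p q : σ, p ∈ A ∧ q ∈ A ∧ p ≠ q) ∧
  (∀ A ∈ 𝒜, ∀ p ∈ A, ∀ q ∈ A, p ≠ q → ∃ r, r ∈ sJoin L {p, q} ∧ r ≠ p ∧ r ≠ q) ∧
  (∀ p q : σ, ∃ n : ℕ, ∃ c : Fin (n + 1) → Set σ, (∀ i, c i ∈ 𝒜) ∧
    p ∈ c 0 ∧ q ∈ c (Fin.last n) ∧
    ∀ i : Fin n, ∃ x y : σ, x ≠ y ∧ (x ∈ c i.castSucc ∧ x ∈ c i.succ) ∧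
      (y ∈ c i.castSucc ∧ y ∈ c i.succ))

/-- `L` is weakly connected: `L ≠ 2` and there is a connected covering. -/
def WeaklyConnected {σ : Type*} (L : Set (Set σ)) : Prop :=
  (∃ p q : σ, p ≠ q) ∧ ∃ 𝒜, IsConnCover L 𝒜

/-- Restriction of `L` to the subset `e`, as a family of subsets of `↥e`. -/
def restrictCS {σ : Type*} (L : Set (Set σ)) (e : Set σ) : Set (Set e) :=
  {B | ∃ a ∈ L, a ⊆ e ∧ B = Subtype.val ⁻¹' a}

/-- Center of an orthocomplemented simple closure space: elements whose
orthocomplement is the set complement. -/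
def centerOf {σ : Type*} (L : Set (Set σ)) (f : Set σ → Set σ) : Set (Set σ) :=
  {a ∈ L | f a = aᶜ}

/-- Central cover of a point `p`. -/
def centralCover {σ : Type*} (L : Set (Set σ)) (f : Set σ → Set σ) (p : σ) : Set σ :=
  ⋂₀ {a ∈ centerOf L f | p ∈ a}

section Family

variable {Ω : Type*} {X : Ω → Type*}

/-- `⋃_α π_α⁻¹ (a α)`. -/
def cylUnion (a : ∀ α, Set (X α)) : Set (∀ α, X α) := {p | ∃ α, p α ∈ a α}

/-- `p[B, β]`: the point `p` with its `β`-th coordinate varying over `B`. -/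
def pSub (p : ∀ α, X α) (β : Ω) (B : Set (X β)) : Set (∀ α, X α) :=
  {q | q β ∈ B ∧ ∀ α, α ≠ β → q α = p α}

/-- The section `R_β[p]` of `R ⊆ ∏_α X α`. -/
def sect (R : Set (∀ α, X α)) (β : Ω) (p : ∀ α, X α) : Set (X β) :=
  {q | ∃ r ∈ R, r β = q ∧ ∀ α, α ≠ β → r α = p α}

/-- The box product `⊼_α L_α`: all nonempty intersections of the sets
`⋃_α π_α⁻¹ (a α)`. -/
def boxProd (L : ∀ α, Set (Set (X α))) : Set (Set (∀ α, X α)) :=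
  {A | ∃ ω ⊆ {B | ∃ a : ∀ α, Set (X α), (∀ α, a α ∈ L α) ∧ B = cylUnion a},
    ω.Nonempty ∧ A = ⋂₀ ω}

/-- The Fraser product `⊻_α L_α`: all `R` whose sections all lie in the factors. -/
def fraserProd (L : ∀ α, Set (Set (X α))) : Set (Set (∀ α, X α)) :=
  {R | ∀ β, ∀ p : ∀ α, X α, sect R β p ∈ L β}

/-- `M` is a weak tensor product of the family `L`: axioms P1–P3. -/
def IsWTP (L : ∀ α, Set (Set (X α))) (M : Set (Set (∀ α, X α))) : Prop :=
  IsSCS M ∧ (∀ a : ∀ α, Set (X α), (∀ α, a α ∈ L α) → cylUnion a ∈ M) ∧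
  (∀ p : ∀ α, X α, ∀ β, ∀ B : Set (X β), pSub p β B ∈ M → B ∈ L β)

/-- The closure operator `⋁_β R = ⋃_p p[⋁ R_β[p]]`. -/
def vJoin (L : ∀ α, Set (Set (X α))) (β : Ω) (R : Set (∀ α, X α)) : Set (∀ α, X α) :=
  ⋃ p : ∀ α, X α, pSub p β (sJoin (L β) (sect R β p))

/-- The orthocomplementation `#` induced on the box product by
orthocomplementations of the factors. -/
def sharp (f : ∀ α, Set (X α) → Set (X α)) (a : Set (∀ α, X α)) : Set (∀ α, X α) :=
  {p | ∀ q ∈ a, ∃ α, p α ∈ f α {q α}}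

end Family

section Binary

variable {X₁ X₂ : Type*}

/-- `a₁ × Σ₂ ∪ Σ₁ × a₂`. -/
def cylUnion₂ (a₁ : Set X₁) (a₂ : Set X₂) : Set (X₁ × X₂) := {p | p.1 ∈ a₁ ∨ p.2 ∈ a₂}

/-- Binary box product. -/
def boxProd₂ (L₁ : Set (Set X₁)) (L₂ : Set (Set X₂)) : Set (Set (X₁ × X₂)) :=
  {A | ∃ ω ⊆ {B | ∃ a₁ ∈ L₁, ∃ a₂ ∈ L₂, B = cylUnion₂ a₁ a₂}, ω.Nonempty ∧ A = ⋂₀ ω}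

/-- Binary Fraser product. -/
def fraserProd₂ (L₁ : Set (Set X₁)) (L₂ : Set (Set X₂)) : Set (Set (X₁ × X₂)) :=
  {R | (∀ p₁, {q | (p₁, q) ∈ R} ∈ L₂) ∧ (∀ p₂, {q | (q, p₂) ∈ R} ∈ L₁)}

/-- Binary weak tensor product: axioms P1–P3. -/
def IsWTP₂ (L₁ : Set (Set X₁)) (L₂ : Set (Set X₂)) (M : Set (Set (X₁ × X₂))) : Prop :=
  IsSCS M ∧ (∀ a₁ ∈ L₁, ∀ a₂ ∈ L₂, cylUnion₂ a₁ a₂ ∈ M) ∧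
  (∀ p₁ : X₁, ∀ A₂ : Set X₂, {p₁} ×ˢ A₂ ∈ M → A₂ ∈ L₂) ∧
  (∀ p₂ : X₂, ∀ A₁ : Set X₁, A₁ ×ˢ {p₂} ∈ M → A₁ ∈ L₁)

/-- The simple closure space `MO_Σ`, containing only `∅`, `Σ` and the singletons. -/
def MOspace (X : Type*) : Set (Set X) := {∅, univ} ∪ {A | ∃ p, A = {p}}

end Binary

/-!
Meets in a simple closure space `L` are intersections and the join of a family is the closure
of its union. Every set is the union of its singletons, so every closed set is the join of the
singletons below it, and since singletons are closed they are exactly the minimal nonempty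
closed sets. Conversely, in an atomistic lattice an element is determined by the atoms below it,
so `a ↦ Σ[a]` is an order embedding; `Σ[⨅ S] = ⋂_{s ∈ S} Σ[s]` makes its image closed under
intersections, and `Σ[⊥] = ∅`, `Σ[p] = {p}` for atoms `p`.
-/

section SimpleClosureSpace

variable {σ : Type*} {L : Set (Set σ)}

theorem subset_sJoin (L : Set (Set σ)) (A : Set σ) : A ⊆ sJoin L A :=
  fun _ hx _ hb => hb.2 hx

theorem sJoin_subset {A b : Set σ} (hb : b ∈ L) (hA : A ⊆ b) : sJoin L A ⊆ b :=
  sInter_subset_of_mem ⟨hb, hA⟩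

theorem sJoin_mem (hL : ∀ ω ⊆ L, ⋂₀ ω ∈ L) (A : Set σ) : sJoin L A ∈ L :=
  hL _ fun _ hb => hb.1

theorem sJoin_eq_self {a : Set σ} (ha : a ∈ L) : sJoin L a = a :=
  (sJoin_subset ha subset_rfl).antisymm (subset_sJoin L a)

theorem sUnion_singletons_subset (a : Set σ) : ⋃₀ {b | (∃ p : σ, b = {p}) ∧ b ⊆ a} = a := by
  ext x
  constructor
  · rintro ⟨b, ⟨-, hba⟩, hxb⟩
    exact hba hxb
  · intro hx
    exact ⟨{x}, ⟨⟨x, rfl⟩, singleton_subset_iff.2 hx⟩, rfl⟩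

theorem exists_eq_singleton_iff_of_singleton_mem (hsing : ∀ p : σ, {p} ∈ L) {a : Set σ} :
    (∃ p : σ, a = {p}) ↔ a ≠ ∅ ∧ ∀ b ∈ L, b ⊆ a → b = ∅ ∨ b = a := by
  constructor
  · rintro ⟨p, rfl⟩
    exact ⟨singleton_ne_empty p, fun b _ hb => subset_singleton_iff_eq.1 hb⟩
  · rintro ⟨hne, hmin⟩
    obtain ⟨p, hp⟩ := nonempty_iff_ne_empty.2 hne
    rcases hmin {p} (hsing p) (singleton_subset_iff.2 hp) with h | h
    · exact absurd h (singleton_ne_empty p)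
    · exact ⟨p, h.symm⟩

end SimpleClosureSpace

section AtomsBelow

variable {α : Type*}

/-- `Σ[c]`. -/
def atomsBelow [Preorder α] [OrderBot α] (c : α) : Set {x : α // IsAtom x} :=
  {y | (y : α) ≤ c}

section PartialOrder

variable [PartialOrder α] [OrderBot α]

theorem atomsBelow_bot : atomsBelow (⊥ : α) = ∅ :=
  eq_empty_of_forall_notMem fun y hy => y.2.1 (le_bot_iff.1 hy)

theorem atomsBelow_atom (p : {x : α // IsAtom x}) : atomsBelow (p : α) = {p} := by
  ext y
  refine ⟨fun hy => ?_, fun hy => hy ▸ le_rfl⟩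
  exact Subtype.ext ((p.2.le_iff.1 hy).resolve_left y.2.1)

theorem atomsBelow_subset_atomsBelow_iff [IsAtomistic α] {a b : α} :
    atomsBelow a ⊆ atomsBelow b ↔ a ≤ b := by
  refine ⟨fun h => le_iff_atom_le_imp.2 fun c hc hca => ?_, fun h y hy => le_trans hy h⟩
  exact h (show (⟨c, hc⟩ : {x : α // IsAtom x}) ∈ atomsBelow a from hca)

variable (α) in
noncomputable def atomsBelowOrderIso [IsAtomistic α] : α ≃o {A | ∃ c : α, A = atomsBelow c} :=
  (OrderEmbedding.ofMapLEIff atomsBelow fun _ _ => atomsBelow_subset_atomsBelow_iff).orderIso.trans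
    (OrderIso.setCongr _ _ (by ext A; exact exists_congr fun _ => eq_comm))

end PartialOrder

theorem atomsBelow_sInf [CompleteLattice α] (s : Set α) :
    atomsBelow (sInf s) = ⋂ c ∈ s, atomsBelow c := by
  ext y
  simp only [atomsBelow, mem_iInter, mem_ofPred_eq, le_sInf_iff]

theorem isSCS_atomsBelow [CompleteLattice α] : IsSCS {A | ∃ c : α, A = atomsBelow c} := by
  refine ⟨fun ω hω => ⟨sInf {c | atomsBelow c ∈ ω}, ?_⟩, ⟨⊥, atomsBelow_bot.symm⟩,
    fun p => ⟨p, (atomsBelow_atom p).symm⟩⟩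
  rw [atomsBelow_sInf]
  ext y
  simp only [mem_sInter, mem_iInter, mem_ofPred_eq]
  refine ⟨fun hy c hc => hy _ hc, fun hy B hB => ?_⟩
  obtain ⟨c, rfl⟩ := hω hB
  exact hy c hB

end AtomsBelow

theorem stmt_0_general {σ : Type*} (L : Set (Set σ)) (hL : IsSCS L)
    (α : Type*) [CompleteLattice α] [IsAtomistic α] :
    -- `L` is a complete lattice:
    ((∀ A ⊆ L, ⋂₀ A ∈ L ∧ (∀ a ∈ A, ⋂₀ A ⊆ a) ∧ ∀ b ∈ L, (∀ a ∈ A, b ⊆ a) → b ⊆ ⋂₀ A) ∧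
     (∀ A ⊆ L, sJoin L (⋃₀ A) ∈ L ∧ (∀ a ∈ A, a ⊆ sJoin L (⋃₀ A)) ∧
        ∀ b ∈ L, (∀ a ∈ A, a ⊆ b) → sJoin L (⋃₀ A) ⊆ b) ∧
     -- `L` is atomistic: every element is the join of the atoms (singletons) below it:
     (∀ a ∈ L, a = sJoin L (⋃₀ {b | (∃ p : σ, b = {p}) ∧ b ⊆ a})) ∧
     -- the atoms of `L` are exactly the singletons:
     (∀ a ∈ L, (∃ p : σ, a = {p}) ↔ a ≠ ∅ ∧ ∀ b ∈ L, b ⊆ a → b = ∅ ∨ b = a)) ∧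
    -- conversely, `{Σ[a] | a ∈ α}` is a simple closure space on the atoms of `α`,
    -- and `α` is (order-)isomorphic to it:
    (IsSCS {A : Set {x : α // IsAtom x} | ∃ c : α, A = {y : {x : α // IsAtom x} | (y : α) ≤ c}} ∧
     ∃ e : α ≃ ↥{A : Set {x : α // IsAtom x} | ∃ c : α, A = {y : {x : α // IsAtom x} | (y : α) ≤ c}},
       ∀ a b : α, a ≤ b ↔ (e a : Set {x : α // IsAtom x}) ⊆ (e b : Set {x : α // IsAtom x})) := by
  refine ⟨⟨fun A hA => ⟨hL.1 A hA, fun _ => sInter_subset_of_mem, fun _ _ => subset_sInter⟩,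
    fun A _ => ⟨sJoin_mem hL.1 _, fun _ ha => (subset_sUnion_of_mem ha).trans (subset_sJoin L _),
      fun _ hb h => sJoin_subset hb (sUnion_subset h)⟩,
    fun a ha => by rw [sUnion_singletons_subset, sJoin_eq_self ha],
    fun _ _ => exists_eq_singleton_iff_of_singleton_mem hL.2.2⟩,
    isSCS_atomsBelow, (atomsBelowOrderIso α).toEquiv, fun _ _ => (atomsBelowOrderIso α).le_iff_le.symm⟩

/-- a simple closure space is a complete atomistic lattice whose atoms are
exactly the singletons (expressed concretely: sInfs and sSups exist in `L`, every element
is the join of the singletons below it, and the atoms of `L` are exactly the singletons);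
conversely, every complete atomistic lattice `α` is isomorphic to the simple closure space
`{Σ[a] | a ∈ α}` on its set of atoms. -/
theorem stmt_0 {σ : Type*} [Nonempty σ] (L : Set (Set σ)) (hL : IsSCS L)
    (α : Type*) [CompleteLattice α] [IsAtomistic α] :
    -- `L` is a complete lattice:
    ((∀ A ⊆ L, ⋂₀ A ∈ L ∧ (∀ a ∈ A, ⋂₀ A ⊆ a) ∧ ∀ b ∈ L, (∀ a ∈ A, b ⊆ a) → b ⊆ ⋂₀ A) ∧
     (∀ A ⊆ L, sJoin L (⋃₀ A) ∈ L ∧ (∀ a ∈ A, a ⊆ sJoin L (⋃₀ A)) ∧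
        ∀ b ∈ L, (∀ a ∈ A, a ⊆ b) → sJoin L (⋃₀ A) ⊆ b) ∧
     -- `L` is atomistic: every element is the join of the atoms (singletons) below it:
     (∀ a ∈ L, a = sJoin L (⋃₀ {b | (∃ p : σ, b = {p}) ∧ b ⊆ a})) ∧
     -- the atoms of `L` are exactly the singletons:
     (∀ a ∈ L, (∃ p : σ, a = {p}) ↔ a ≠ ∅ ∧ ∀ b ∈ L, b ⊆ a → b = ∅ ∨ b = a)) ∧
    -- conversely, `{Σ[a] | a ∈ α}` is a simple closure space on the atoms of `α`,
    -- and `α` is (order-)isomorphic to it: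
    (IsSCS {A : Set {x : α // IsAtom x} | ∃ c : α, A = {y : {x : α // IsAtom x} | (y : α) ≤ c}} ∧
     ∃ e : α ≃ ↥{A : Set {x : α // IsAtom x} | ∃ c : α, A = {y : {x : α // IsAtom x} | (y : α) ≤ c}},
       ∀ a b : α, a ≤ b ↔ (e a : Set {x : α // IsAtom x}) ⊆ (e b : Set {x : α // IsAtom x})) :=
  stmt_0_general L hL α
end

section
/- If L is a weak tensor product of a family of simple closure spaces (L_α), then for every a in ∏_α L_α, the product set ∏_α a_α belongs to L. -/
open Set

/-! The product `∏_α a_α` is the intersection over `β` of the cylinders `π_β⁻¹(a_β)`, and each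
such cylinder is the union `⋃_α π_α⁻¹(b_α)` of (P2) for the family `b` equal to `a_β` at `β` and
to `∅` elsewhere. -/

section WeakTensorProduct

variable {Ω : Type*} {X : Ω → Type*}

theorem IsSCS.iInter_mem {σ ι : Type*} {M : Set (Set σ)} (hM : IsSCS M) {s : ι → Set σ}
    (hs : ∀ i, s i ∈ M) : ⋂ i, s i ∈ M := by
  rw [← sInter_range]
  exact hM.1 _ (range_subset_iff.2 hs)

theorem cylUnion_update_empty [DecidableEq Ω] (β : Ω) (s : Set (X β)) :
    cylUnion (Function.update (fun α => (∅ : Set (X α))) β s) = Function.eval β ⁻¹' s := by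
  ext p
  refine ⟨fun ⟨α, hα⟩ => ?_, fun hp => ⟨β, by simpa using hp⟩⟩
  rcases eq_or_ne α β with rfl | hne
  · simpa using hα
  · simp [Function.update_of_ne hne] at hα

theorem IsWTP.preimage_eval_mem {L : ∀ α, Set (Set (X α))} {M : Set (Set (∀ α, X α))}
    (hM : IsWTP L M) (hL : ∀ α, ∅ ∈ L α) {β : Ω} {s : Set (X β)} (hs : s ∈ L β) :
    Function.eval β ⁻¹' s ∈ M := by
  classical
  rw [← cylUnion_update_empty]
  refine hM.2.1 _ fun α => ?_
  rcases eq_or_ne α β with rfl | hne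
  · simpa using hs
  · simpa [Function.update_of_ne hne] using hL α

end WeakTensorProduct

/-- in a weak tensor product, every product set `∏_α a_α` with
`a_α ∈ L_α` belongs to `L`. -/
theorem stmt_1 {Ω : Type*} {X : Ω → Type*} (L : ∀ α, Set (Set (X α)))
    (hL : ∀ α, IsSCS (L α)) (M : Set (Set (∀ α, X α))) (hM : IsWTP L M)
    (a : ∀ α, Set (X α)) (ha : ∀ α, a α ∈ L α) :
    {p : ∀ α, X α | ∀ α, p α ∈ a α} ∈ M := by
  have hbox : {p : ∀ α, X α | ∀ α, p α ∈ a α} = ⋂ β, Function.eval β ⁻¹' a β := by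
    ext p
    simp
  rw [hbox]
  exact hM.1.iInter_mem fun β => hM.preimage_eval_mem (fun α => (hL α).2.1) (ha β)
end

section
/- If there is at most one index β such that L_β is not the full power set of Σ_β, then the box product ⊼_α L_α equals the Fraser tensor product ⊻_α L_α, and both equal {R ⊆ ∏_α Σ_α | R_β[p] ∈ L_β for all p}. -/
open Set

/-!
Sections commute with intersections, and the section `(⋃_α π_α⁻¹ (a α))_β[p]` is `Σ_β` when
some `p γ ∈ a γ` with `γ ≠ β`, and `a β` otherwise; hence a box product always lies in the
Fraser product. Conversely, when every factor other than `L_β` is a full power set, a set `R`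
whose `β`-sections lie in `L_β` is the intersection over all points `p` of the cylinder union
with `β`-factor `R_β[p]` and `γ`-factors `{p γ}ᶜ`: each of these contains `R`, and the one
indexed by `p` contains `p` only if `p ∈ R`.
-/

lemma IsSCS.univ_mem {σ : Type*} {L : Set (Set σ)} (hL : IsSCS L) : (univ : Set σ) ∈ L := by
  simpa using hL.1 ∅ (empty_subset L)

section Products

variable {Ω : Type*} {X : Ω → Type*}

lemma sect_eq_preimage_update [DecidableEq Ω] (R : Set (∀ α, X α)) (β : Ω) (p : ∀ α, X α) :
    sect R β p = Function.update p β ⁻¹' R := by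
  ext q
  constructor
  · rintro ⟨r, hr, rfl, hrp⟩
    have hr_eq : Function.update p β (r β) = r :=
      Function.update_eq_iff.2 ⟨rfl, fun α hα => (hrp α hα).symm⟩
    rwa [mem_preimage, hr_eq]
  · intro h
    exact ⟨_, h, Function.update_self .., fun α hα => Function.update_of_ne hα ..⟩

lemma sect_sInter (ω : Set (Set (∀ α, X α))) (β : Ω) (p : ∀ α, X α) :
    sect (⋂₀ ω) β p = ⋂ B ∈ ω, sect B β p := by
  classical
  simp only [sect_eq_preimage_update, preimage_sInter]

lemma sect_cylUnion (a : ∀ α, Set (X α)) (β : Ω) (p : ∀ α, X α) :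
    sect (cylUnion a) β p = {q | q ∈ a β ∨ ∃ γ ≠ β, p γ ∈ a γ} := by
  classical
  ext q
  rw [sect_eq_preimage_update]
  exact Function.exists_update_iff p fun α x => x ∈ a α

lemma sect_cylUnion_mem {β : Ω} {L : Set (Set (X β))} (hL : IsSCS L) {a : ∀ α, Set (X α)}
    (ha : a β ∈ L) (p : ∀ α, X α) : sect (cylUnion a) β p ∈ L := by
  rw [sect_cylUnion]
  by_cases h : ∃ γ ≠ β, p γ ∈ a γ
  · simpa [h] using hL.univ_mem
  · simpa [h] using ha

theorem boxProd_subset_fraserProd {L : ∀ α, Set (Set (X α))} (hL : ∀ α, IsSCS (L α)) :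
    boxProd L ⊆ fraserProd L := by
  rintro _ ⟨ω, hω, -, rfl⟩ β p
  rw [sect_sInter, ← sInter_image]
  refine (hL β).1 _ ?_
  rintro _ ⟨B, hB, rfl⟩
  obtain ⟨a, ha, rfl⟩ := hω hB
  exact sect_cylUnion_mem (hL β) (ha β) p

theorem fraserProd_eq_of_forall_ne_eq_univ {L : ∀ α, Set (Set (X α))} {β : Ω}
    (hβ : ∀ γ, γ ≠ β → L γ = univ) :
    fraserProd L = {R | ∀ p : ∀ α, X α, sect R β p ∈ L β} := by
  ext R
  refine ⟨fun hR => hR β, fun hR γ p => ?_⟩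
  obtain rfl | hγ := eq_or_ne γ β
  · exact hR p
  · rw [hβ γ hγ]
    trivial

section SectCyl

variable [DecidableEq Ω]

def sectCyl (R : Set (∀ α, X α)) (β : Ω) (p : ∀ α, X α) : Set (∀ α, X α) :=
  cylUnion (Function.update (fun γ => ({p γ}ᶜ : Set (X γ))) β (sect R β p))

lemma mem_sectCyl_iff {R : Set (∀ α, X α)} {β : Ω} {p r : ∀ α, X α} :
    r ∈ sectCyl R β p ↔ Function.update p β (r β) ∈ R ∨ ∃ γ ≠ β, r γ ≠ p γ := by
  change (∃ α, _) ↔ _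
  rw [Function.exists_update_iff _ fun α (s : Set (X α)) => r α ∈ s, sect_eq_preimage_update]
  rfl

lemma subset_sectCyl (R : Set (∀ α, X α)) (β : Ω) (p : ∀ α, X α) : R ⊆ sectCyl R β p := by
  intro r hr
  by_cases h : ∃ γ ≠ β, r γ ≠ p γ
  · exact mem_sectCyl_iff.2 (Or.inr h)
  · push Not at h
    have hr_eq : Function.update p β (r β) = r :=
      Function.update_eq_iff.2 ⟨rfl, fun α hα => (h α hα).symm⟩
    exact mem_sectCyl_iff.2 (Or.inl (by rwa [hr_eq]))

lemma self_mem_sectCyl_iff {R : Set (∀ α, X α)} {β : Ω} {p : ∀ α, X α} :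
    p ∈ sectCyl R β p ↔ p ∈ R := by
  simp [mem_sectCyl_iff]

lemma iInter_sectCyl (R : Set (∀ α, X α)) (β : Ω) : ⋂ p, sectCyl R β p = R :=
  (subset_iInter (subset_sectCyl R β)).antisymm' fun p hp =>
    self_mem_sectCyl_iff.1 (mem_iInter.1 hp p)

end SectCyl

theorem mem_boxProd_of_forall_sect_mem [∀ α, Nonempty (X α)]
    {L : ∀ α, Set (Set (X α))} {β : Ω} (hβ : ∀ γ, γ ≠ β → L γ = univ) {R : Set (∀ α, X α)}
    (hR : ∀ p, sect R β p ∈ L β) : R ∈ boxProd L := by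
  classical
  refine ⟨range (sectCyl R β), ?_, range_nonempty _,
    ((sInter_range _).trans (iInter_sectCyl R β)).symm⟩
  rintro _ ⟨p, rfl⟩
  refine ⟨_, ?_, rfl⟩
  exact (Function.forall_update_iff _ fun α s => s ∈ L α).2
    ⟨hR p, fun γ hγ => (hβ γ hγ).symm ▸ mem_univ _⟩

end Products

theorem stmt_8_general {Ω : Type*} {X : Ω → Type*} [∀ α, Nonempty (X α)]
    (L : ∀ α, Set (Set (X α))) (hL : ∀ α, IsSCS (L α))
    (β : Ω) (hβ : ∀ γ, γ ≠ β → L γ = Set.univ) :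
    boxProd L = fraserProd L ∧
      fraserProd L = {R | ∀ p : ∀ α, X α, sect R β p ∈ L β} := by
  have hfraser := fraserProd_eq_of_forall_ne_eq_univ hβ
  refine ⟨(boxProd_subset_fraserProd hL).antisymm fun R hR => ?_, hfraser⟩
  rw [hfraser] at hR
  exact mem_boxProd_of_forall_sect_mem hβ hR

/-- if at most one factor `L_β` is not the full power set, then the box
product equals the Fraser product, and both equal `{R | R_β[p] ∈ L_β for all p}`. -/
theorem stmt_8 {Ω : Type*} [Nonempty Ω] {X : Ω → Type*} [∀ α, Nonempty (X α)]
    (L : ∀ α, Set (Set (X α))) (hL : ∀ α, IsSCS (L α))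
    (β : Ω) (hβ : ∀ γ, γ ≠ β → L γ = Set.univ) :
    boxProd L = fraserProd L ∧
      fraserProd L = {R | ∀ p : ∀ α, X α, sect R β p ∈ L β} :=
  stmt_8_general L hL β hβ
end

section
/- If the box product ⊼_α L_α of a family of simple closure spaces is coatomistic, then every L_α is coatomistic. -/
open Set

/-!
A coatom `Y` of the box product is a single cylinder union `⋃_α π_α⁻¹ b_α`, since it is
the intersection of the cylinder unions above it. If a point `p` lies outside `Y`, then on the
line through `p` in direction `β` the set `Y` is cut out by `b_β`, and comparing `Y` with the
cylinder union obtained by enlarging `b_β` shows that `b_β` is a coatom of `L_β`. So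
separating `π_β⁻¹ A` from a point by a coatom of the box product separates `A` from the
`β`-coordinate of that point by a coatom of `L_β`.
-/

open Function

lemma coatomistic_iff_exists_coatom {σ : Type*} {L : Set (Set σ)} :
    Coatomistic L ↔ ∀ a ∈ L, ∀ q ∉ a, ∃ x, IsCoatomOf L x ∧ a ⊆ x ∧ q ∉ x := by
  refine forall₂_congr fun a _ => ?_
  constructor
  · intro ha q hq
    rw [ha] at hq
    simpa [and_assoc] using hq
  · intro ha
    refine (subset_sInter fun x hx => hx.2).antisymm fun q hq => ?_
    by_contra hqa
    obtain ⟨x, hx, hax, hqx⟩ := ha q hqa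
    exact hqx (hq x ⟨hx, hax⟩)

section BoxProd

variable {Ω : Type*} {X : Ω → Type*} {L : ∀ α, Set (Set (X α))}

lemma cylUnion_mono {a b : ∀ α, Set (X α)} (h : ∀ α, a α ⊆ b α) :
    cylUnion a ⊆ cylUnion b :=
  fun _ ⟨α, hα⟩ => ⟨α, h α hα⟩

lemma cylUnion_mem_boxProd {a : ∀ α, Set (X α)} (ha : ∀ α, a α ∈ L α) :
    cylUnion a ∈ boxProd L :=
  ⟨{cylUnion a}, singleton_subset_iff.2 ⟨a, ha, rfl⟩, singleton_nonempty _,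
    (sInter_singleton _).symm⟩

lemma eval_preimage_mem_boxProd (hL : ∀ α, ∅ ∈ L α) {β : Ω} {A : Set (X β)}
    (hA : A ∈ L β) : eval β ⁻¹' A ∈ boxProd L := by
  classical
  convert cylUnion_mem_boxProd (a := update (fun α => ∅) β A) fun α => ?_
  · ext p
    refine ⟨fun hp => ⟨β, by simpa using hp⟩, fun ⟨α, hα⟩ => ?_⟩
    rcases eq_or_ne α β with rfl | hαβ
    · simpa using hα
    · simp [update_of_ne hαβ] at hα
  · rcases eq_or_ne α β with rfl | hαβ
    · simpa using hA
    · simpa [update_of_ne hαβ] using hL α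

lemma update_mem_cylUnion_iff [DecidableEq Ω] {b : ∀ α, Set (X α)} {p : ∀ α, X α}
    {β : Ω} (hp : ∀ α, α ≠ β → p α ∉ b α) {t : X β} :
    update p β t ∈ cylUnion b ↔ t ∈ b β := by
  refine ⟨fun ⟨α, hα⟩ => ?_, fun ht => ⟨β, by simpa using ht⟩⟩
  rcases eq_or_ne α β with rfl | hαβ
  · simpa using hα
  · rw [update_of_ne hαβ] at hα
    exact absurd hα (hp α hαβ)

lemma IsCoatomOf.exists_eq_cylUnion {Y : Set (∀ α, X α)}
    (hY : IsCoatomOf (boxProd L) Y) :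
    ∃ b : ∀ α, Set (X α), (∀ α, b α ∈ L α) ∧ Y = cylUnion b := by
  obtain ⟨⟨ω, hω, -, rfl⟩, hY_ne, hY_max⟩ := hY
  by_contra! hno
  refine hY_ne (sInter_eq_univ.2 fun B hB => ?_)
  obtain ⟨b, hb, rfl⟩ := hω hB
  refine (hY_max _ (cylUnion_mem_boxProd hb) (sInter_subset_of_mem hB)).resolve_left ?_
  exact fun h => hno b hb h.symm

lemma IsCoatomOf.component {b : ∀ α, Set (X α)} (hb : ∀ α, b α ∈ L α)
    (hY : IsCoatomOf (boxProd L) (cylUnion b)) {p : ∀ α, X α} (hp : p ∉ cylUnion b)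
    (β : Ω) :
    IsCoatomOf (L β) (b β) := by
  classical
  have hpβ : p β ∉ b β := fun h => hp ⟨β, h⟩
  refine ⟨hb β, fun h => hpβ (h ▸ mem_univ _), fun c hc hbc => ?_⟩
  have hb' : ∀ α, update b β c α ∈ L α := by
    intro α
    rcases eq_or_ne α β with rfl | hαβ
    · simpa using hc
    · simpa [update_of_ne hαβ] using hb α
  have hle : cylUnion b ⊆ cylUnion (update b β c) := by
    refine cylUnion_mono fun α => ?_
    rcases eq_or_ne α β with rfl | hαβ
    · simpa using hbc
    · rw [update_of_ne hαβ]
  have hp_off : ∀ α, α ≠ β → p α ∉ b α := fun α _ h => hp ⟨α, h⟩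
  have hp_off' : ∀ α, α ≠ β → p α ∉ update b β c α := fun α hαβ => by
    simpa [update_of_ne hαβ] using hp_off α hαβ
  rcases hY.2.2 _ (cylUnion_mem_boxProd hb') hle with heq | huniv
  · refine .inl (subset_antisymm (fun t ht => ?_) hbc)
    rw [← update_mem_cylUnion_iff hp_off, ← heq]
    exact ⟨β, by simpa using ht⟩
  · refine .inr (eq_univ_of_forall fun t => ?_)
    simpa using (update_mem_cylUnion_iff hp_off').1 (huniv ▸ mem_univ (update p β t))

end BoxProd

theorem stmt_12_general {Ω : Type*} {X : Ω → Type*} [∀ α, Nonempty (X α)]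
    (L : ∀ α, Set (Set (X α))) (hL : ∀ α, IsSCS (L α))
    (h : Coatomistic (boxProd L)) : ∀ α, Coatomistic (L α) := by
  classical
  intro β
  rw [coatomistic_iff_exists_coatom] at h ⊢
  intro A hA q hqA
  let p := update (fun α => Classical.arbitrary (X α)) β q
  obtain ⟨Y, hY, hAY, hpY⟩ :=
    h _ (eval_preimage_mem_boxProd (fun α => (hL α).2.1) hA) p (by simpa [p] using hqA)
  obtain ⟨b, hb, rfl⟩ := hY.exists_eq_cylUnion
  refine ⟨b β, hY.component hb hpY β, fun t ht => ?_,
    fun hq => hpY ⟨β, by simpa [p] using hq⟩⟩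
  rw [← update_mem_cylUnion_iff fun α _ h => hpY ⟨α, h⟩]
  exact hAY (by simpa using ht)

/-- if the box product is coatomistic, then every factor is coatomistic. -/
theorem stmt_12 {Ω : Type*} [Nonempty Ω] {X : Ω → Type*} [∀ α, Nonempty (X α)]
    (L : ∀ α, Set (Set (X α))) (hL : ∀ α, IsSCS (L α))
    (h : Coatomistic (boxProd L)) : ∀ α, Coatomistic (L α) :=
  stmt_12_general L hL h
end
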